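/- Let {ψ_j}_{j∈ℕ} be a frame for a closed subspace S of a Hilbert space H with frame bounds c₁ ≤ c₂, and let S be the frame operator S f = Σ_j ⟨f, ψ_j⟩ ψ_j. If T is a closed subspace with cos(θ_{T S}) > 0, then for all φ ∈ T: c₁ cos²(θ_{T S}) ‖φ‖² ≤ ⟨S φ, φ⟩ ≤ c₂ ‖φ‖². -/

import Mathlib

/-!
Every `ψ j` lies in `S`, so the frame coefficients of `φ` are those of its projection
`g = P_S φ`. Hence `⟪𝒮 φ, φ⟫ = ∑ |⟪ψ j, g⟫|²`, which the frame bounds at `g` place between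
`c₁ ‖g‖²` and `c₂ ‖g‖²`, and `cos θ_{TS} ‖φ‖ ≤ ‖g‖ ≤ ‖φ‖`. The upper frame bound is what makes
the series defining `𝒮` converge: by duality it bounds the synthesis map `c ↦ ∑ c j • ψ j`.
-/

open InnerProductSpace

/-- The cosine of the subspace angle between closed subspaces `A` and `B` of a Hilbert
space: `cos θ_{AB} = inf_{a ∈ A, ‖a‖ = 1} ‖P_B a‖`. -/
noncomputable def cosAngle {H : Type*} [NormedAddCommGroup H] [InnerProductSpace ℂ H]
    (A B : Submodule ℂ H) [Submodule.HasOrthogonalProjection B] : ℝ :=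
  ⨅ a : {x : H // x ∈ A ∧ ‖x‖ = 1}, ‖((Submodule.orthogonalProjectionOnto B (a : H)) : H)‖

open RCLike ComplexConjugate

section FrameSeries

variable {𝕜 E ι : Type*} [RCLike 𝕜] [NormedAddCommGroup E] [InnerProductSpace 𝕜 E]

/-- A non-summable family has `tsum` zero, so the lower bound would force `f = 0`. -/
lemma summable_norm_inner_sq_of_le_tsum {ψ : ι → E} {c : ℝ} (hc : 0 < c) {f : E}
    (hf : c * ‖f‖ ^ 2 ≤ ∑' j, ‖inner 𝕜 (ψ j) f‖ ^ 2) :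
    Summable fun j => ‖inner 𝕜 (ψ j) f‖ ^ 2 := by
  by_contra hns
  rw [tsum_eq_zero_of_not_summable hns] at hf
  have hf0 : f = 0 := by
    have : ‖f‖ ^ 2 ≤ 0 := nonpos_of_mul_nonpos_right hf hc
    simpa using this
  exact hns (by simp [hf0])

lemma inner_tsum_inner_smul_self {ψ : ι → E} {f : E}
    (h : Summable fun j => inner 𝕜 (ψ j) f • ψ j) :
    inner 𝕜 (∑' j, inner 𝕜 (ψ j) f • ψ j) f = ((∑' j, ‖inner 𝕜 (ψ j) f‖ ^ 2 : ℝ) : 𝕜) := by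
  have hterm (j : ι) :
      inner 𝕜 f (inner 𝕜 (ψ j) f • ψ j) = ((‖inner 𝕜 (ψ j) f‖ ^ 2 : ℝ) : 𝕜) := by
    rw [inner_smul_right, ← inner_conj_symm f (ψ j), mul_conj, ofReal_pow]
  have hx : HasSum (fun j => ((‖inner 𝕜 (ψ j) f‖ ^ 2 : ℝ) : 𝕜))
      (inner 𝕜 f (∑' j, inner 𝕜 (ψ j) f • ψ j)) := by
    simpa only [innerSL_apply_apply, hterm] using (innerSL 𝕜 f).hasSum h.hasSum
  rw [← inner_conj_symm, ← hx.tsum_eq, ofReal_tsum, conj_tsum]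
  simp only [conj_ofReal]

variable {S : Submodule 𝕜 E} {ψ : ι → E} {C : ℝ}

lemma norm_sum_smul_sq_le_of_bessel (hC : 0 ≤ C) (hψS : ∀ j, ψ j ∈ S)
    (hB : ∀ f ∈ S, ∀ F : Finset ι, ∑ j ∈ F, ‖inner 𝕜 (ψ j) f‖ ^ 2 ≤ C * ‖f‖ ^ 2)
    (F : Finset ι) (c : ι → 𝕜) :
    ‖∑ j ∈ F, c j • ψ j‖ ^ 2 ≤ C * ∑ j ∈ F, ‖c j‖ ^ 2 := by
  set u := ∑ j ∈ F, c j • ψ j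
  have hu : u ∈ S := S.sum_mem fun j _ => S.smul_mem _ (hψS j)
  have hA : 0 ≤ ∑ j ∈ F, ‖c j‖ ^ 2 := by positivity
  have hu_le : ‖u‖ ^ 2 ≤ ∑ j ∈ F, ‖c j‖ * ‖inner 𝕜 (ψ j) u‖ :=
    calc ‖u‖ ^ 2 = re (inner 𝕜 u u) := (inner_self_eq_norm_sq u).symm
      _ = re (∑ j ∈ F, conj (c j) * inner 𝕜 (ψ j) u) := by
        simp only [u, sum_inner, inner_smul_left]
      _ ≤ ‖∑ j ∈ F, conj (c j) * inner 𝕜 (ψ j) u‖ := re_le_norm _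
      _ ≤ ∑ j ∈ F, ‖conj (c j) * inner 𝕜 (ψ j) u‖ := norm_sum_le _ _
      _ = ∑ j ∈ F, ‖c j‖ * ‖inner 𝕜 (ψ j) u‖ := by simp only [norm_mul, norm_conj]
  have hsq : (‖u‖ ^ 2) ^ 2 ≤ (∑ j ∈ F, ‖c j‖ ^ 2) * (C * ‖u‖ ^ 2) :=
    calc (‖u‖ ^ 2) ^ 2 ≤ (∑ j ∈ F, ‖c j‖ * ‖inner 𝕜 (ψ j) u‖) ^ 2 :=
          pow_le_pow_left₀ (by positivity) hu_le 2
      _ ≤ (∑ j ∈ F, ‖c j‖ ^ 2) * ∑ j ∈ F, ‖inner 𝕜 (ψ j) u‖ ^ 2 :=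
          Finset.sum_mul_sq_le_sq_mul_sq F _ _
      _ ≤ (∑ j ∈ F, ‖c j‖ ^ 2) * (C * ‖u‖ ^ 2) := mul_le_mul_of_nonneg_left (hB u hu F) hA
  rcases (sq_nonneg ‖u‖).eq_or_lt with hu0 | hu_pos
  · rw [← hu0]; positivity
  · nlinarith

lemma summable_smul_of_bessel [CompleteSpace E] (hC : 0 ≤ C) (hψS : ∀ j, ψ j ∈ S)
    (hB : ∀ f ∈ S, ∀ F : Finset ι, ∑ j ∈ F, ‖inner 𝕜 (ψ j) f‖ ^ 2 ≤ C * ‖f‖ ^ 2)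
    {c : ι → 𝕜} (hc : Summable fun j => ‖c j‖ ^ 2) : Summable fun j => c j • ψ j := by
  refine summable_iff_vanishing_norm.mpr fun ε hε => ?_
  obtain ⟨s, hs⟩ := summable_iff_vanishing_norm.mp hc (ε ^ 2 / (C + 1)) (by positivity)
  refine ⟨s, fun t ht => ?_⟩
  have hsmall : ∑ j ∈ t, ‖c j‖ ^ 2 < ε ^ 2 / (C + 1) := lt_of_abs_lt (hs t ht)
  have hA : 0 ≤ ∑ j ∈ t, ‖c j‖ ^ 2 := by positivity
  have : ‖∑ j ∈ t, c j • ψ j‖ ^ 2 < ε ^ 2 :=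
    calc ‖∑ j ∈ t, c j • ψ j‖ ^ 2 ≤ C * ∑ j ∈ t, ‖c j‖ ^ 2 :=
          norm_sum_smul_sq_le_of_bessel hC hψS hB t c
      _ ≤ (C + 1) * ∑ j ∈ t, ‖c j‖ ^ 2 := by gcongr; linarith
      _ < (C + 1) * (ε ^ 2 / (C + 1)) := by gcongr
      _ = ε ^ 2 := by field_simp
  exact lt_of_pow_lt_pow_left₀ 2 hε.le this

end FrameSeries

section Angle

variable {H : Type*} [NormedAddCommGroup H] [InnerProductSpace ℂ H]
  {A B : Submodule ℂ H} [B.HasOrthogonalProjection]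

lemma cosAngle_nonneg : 0 ≤ cosAngle A B :=
  Real.iInf_nonneg fun _ => norm_nonneg _

lemma cosAngle_mul_norm_le {φ : H} (hφ : φ ∈ A) :
    cosAngle A B * ‖φ‖ ≤ ‖(B.orthogonalProjectionOnto φ : H)‖ := by
  rcases eq_or_ne φ 0 with rfl | hφ0
  · simp
  have hn : 0 < ‖φ‖ := norm_pos_iff.mpr hφ0
  let a : {x : H // x ∈ A ∧ ‖x‖ = 1} :=
    ⟨(‖φ‖ : ℂ)⁻¹ • φ, A.smul_mem _ hφ, by simp [norm_smul, hn.ne']⟩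
  have ha : cosAngle A B ≤ ‖φ‖⁻¹ * ‖(B.orthogonalProjectionOnto φ : H)‖ := by
    have := ciInf_le (f := fun a : {x : H // x ∈ A ∧ ‖x‖ = 1} ↦
      ‖(B.orthogonalProjectionOnto (a : H) : H)‖) ⟨0, by rintro _ ⟨_, rfl⟩; exact norm_nonneg _⟩ a
    simpa [cosAngle, a, norm_smul] using this
  rwa [← le_div_iff₀ hn, div_eq_inv_mul]

end Angle

open scoped ComplexInnerProductSpace in
theorem frame_operator_bounds_on_T_general
    {H : Type*} [NormedAddCommGroup H] [InnerProductSpace ℂ H] [CompleteSpace H]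
    (S T : Submodule ℂ H) [CompleteSpace S]
    (ψ : ℕ → H) (hψS : ∀ j, ψ j ∈ S) (c₁ c₂ : ℝ) (hc₁ : 0 < c₁) (hc : c₁ ≤ c₂)
    (hframe : ∀ f ∈ S,
      c₁ * ‖f‖ ^ 2 ≤ ∑' j, ‖⟪ψ j, f⟫‖ ^ 2 ∧ ∑' j, ‖⟪ψ j, f⟫‖ ^ 2 ≤ c₂ * ‖f‖ ^ 2)
    (𝒮 : H →L[ℂ] H) (h𝒮 : ∀ f, 𝒮 f = ∑' j, ⟪ψ j, f⟫ • ψ j) :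
    ∀ φ ∈ T,
      c₁ * cosAngle T S ^ 2 * ‖φ‖ ^ 2 ≤ (⟪𝒮 φ, φ⟫).re ∧
      (⟪𝒮 φ, φ⟫).re ≤ c₂ * ‖φ‖ ^ 2 := by
  have hsummable (f : H) (hf : f ∈ S) : Summable fun j => ‖⟪ψ j, f⟫‖ ^ 2 :=
    summable_norm_inner_sq_of_le_tsum hc₁ (hframe f hf).1
  have hbessel : ∀ f ∈ S, ∀ F : Finset ℕ, ∑ j ∈ F, ‖⟪ψ j, f⟫‖ ^ 2 ≤ c₂ * ‖f‖ ^ 2 :=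
    fun f hf F => ((hsummable f hf).sum_le_tsum F fun _ _ => sq_nonneg _).trans (hframe f hf).2
  intro φ hφ
  set g : H := (S.orthogonalProjectionOnto φ : H)
  obtain ⟨hlower, hupper⟩ := hframe g (Submodule.coe_mem _)
  have hcoef (j : ℕ) : ⟪ψ j, φ⟫ = ⟪ψ j, g⟫ :=
    (S.inner_orthogonalProjectionOnto_eq_of_mem_left ⟨ψ j, hψS j⟩ φ).symm
  have hquad : (⟪𝒮 φ, φ⟫).re = ∑' j, ‖⟪ψ j, g⟫‖ ^ 2 := by
    have hsum : Summable fun j => ⟪ψ j, φ⟫ • ψ j :=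
      summable_smul_of_bessel (hc₁.le.trans hc) hψS hbessel
        (by simpa only [hcoef] using hsummable g (Submodule.coe_mem _))
    rw [h𝒮, inner_tsum_inner_smul_self hsum]
    simp only [hcoef]
    exact RCLike.ofReal_re (K := ℂ) _
  have hcos : 0 ≤ cosAngle T S * ‖φ‖ := mul_nonneg cosAngle_nonneg (norm_nonneg φ)
  rw [hquad]
  constructor
  · calc c₁ * cosAngle T S ^ 2 * ‖φ‖ ^ 2 = c₁ * (cosAngle T S * ‖φ‖) ^ 2 := by ring
      _ ≤ c₁ * ‖g‖ ^ 2 := by gcongr; exact cosAngle_mul_norm_le hφ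
      _ ≤ _ := hlower
  · calc _ ≤ c₂ * ‖g‖ ^ 2 := hupper
      _ ≤ c₂ * ‖φ‖ ^ 2 := by
        gcongr
        · linarith
        · exact S.norm_orthogonalProjectionOnto_apply_le φ

open scoped ComplexInnerProductSpace in
/-- If `{ψ_j}` is a frame for a closed subspace `S` with bounds `c₁ ≤ c₂`, `𝒮` is the frame
operator, and `T` is a closed subspace with `cos θ_{T S} > 0`, then for all `φ ∈ T`:
`c₁ cos²(θ_{T S}) ‖φ‖² ≤ ⟨𝒮 φ, φ⟩ ≤ c₂ ‖φ‖²`. -/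
theorem frame_operator_bounds_on_T
    {H : Type*} [NormedAddCommGroup H] [InnerProductSpace ℂ H] [CompleteSpace H]
    (S T : Submodule ℂ H) [CompleteSpace S] [CompleteSpace T]
    (ψ : ℕ → H) (hψS : ∀ j, ψ j ∈ S) (c₁ c₂ : ℝ) (hc₁ : 0 < c₁) (hc : c₁ ≤ c₂)
    (hframe : ∀ f ∈ S,
      c₁ * ‖f‖ ^ 2 ≤ ∑' j, ‖⟪ψ j, f⟫‖ ^ 2 ∧ ∑' j, ‖⟪ψ j, f⟫‖ ^ 2 ≤ c₂ * ‖f‖ ^ 2)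
    (𝒮 : H →L[ℂ] H) (h𝒮 : ∀ f, 𝒮 f = ∑' j, ⟪ψ j, f⟫ • ψ j)
    (hcos : 0 < cosAngle T S) :
    ∀ φ ∈ T,
      c₁ * cosAngle T S ^ 2 * ‖φ‖ ^ 2 ≤ (⟪𝒮 φ, φ⟫).re ∧
      (⟪𝒮 φ, φ⟫).re ≤ c₂ * ‖φ‖ ^ 2 :=
  frame_operator_bounds_on_T_general S T ψ hψS c₁ c₂ hc₁ hc hframe 𝒮 h𝒮
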